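/- Let K be an algebraically closed field of characteristic 2 and let a = (a₁,a₂,a₃,a₄) ∈ K⁴, a ≠ 0. Then Sing(X_a) contains the S₄-orbit of the point [0:0:1:1] for every such a, and Sing(X_a) contains the S₄-orbit of the point [0:0:0:1] if and only if a₁ = a₂ = 0. -/

import Mathlib

open MvPolynomial

noncomputable section

/-- The singular locus of the surface `{F = 0} ⊆ ℙ³_K`: the set of points of `ℙ³_K` at which
`F` and all four partial derivatives of `F` vanish (tested on every representative vector). -/
def singLocus {K : Type*} [Field K] (F : MvPolynomial (Fin 4) K) :
    Set (Projectivization K (Fin 4 → K)) :=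
  {p | ∀ (v : Fin 4 → K) (hv : v ≠ 0), Projectivization.mk K v hv = p →
      (eval v F = 0 ∧ ∀ i, eval v (pderiv i F) = 0)}

/-- The `S₄`-orbit of the point of `ℙ³_K` represented by `v`, for the action of `S₄` permuting
the four coordinates. -/
def s4Orbit {K : Type*} [Field K] (v : Fin 4 → K) : Set (Projectivization K (Fin 4 → K)) :=
  {q | ∃ (g : Equiv.Perm (Fin 4)) (h : v ∘ g ≠ 0), q = Projectivization.mk K (v ∘ g) h}

/-- The symmetric quartic `F_a = a₁σ₁⁴ + a₂σ₁²σ₂ + a₃σ₁σ₃ + a₄σ₄`, where `σᵢ` is the `i`-th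
elementary symmetric polynomial in `x₁, x₂, x₃, x₄`. -/
def symQuartic {K : Type*} [Field K] (a : Fin 4 → K) : MvPolynomial (Fin 4) K :=
  C (a 0) * esymm (Fin 4) K 1 ^ 4 + C (a 1) * esymm (Fin 4) K 1 ^ 2 * esymm (Fin 4) K 2
    + C (a 2) * esymm (Fin 4) K 1 * esymm (Fin 4) K 3 + C (a 3) * esymm (Fin 4) K 4

section Aux

variable {K : Type*} [Field K]

lemma esymm1_eq : esymm (Fin 4) K 1 = X 0 + X 1 + X 2 + X 3 := by
  simp [esymm_one, Fin.sum_univ_four]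

lemma esymm2_eq : esymm (Fin 4) K 2 =
    X 0 * X 1 + X 0 * X 2 + X 0 * X 3 + X 1 * X 2 + X 1 * X 3 + X 2 * X 3 := by
  have h : (Finset.powersetCard 2 (Finset.univ : Finset (Fin 4))) =
      {{0,1},{0,2},{0,3},{1,2},{1,3},{2,3}} := by decide
  rw [esymm, h]
  simp (config := { decide := true }) [Finset.sum_insert, Finset.prod_insert]
  ring

lemma esymm3_eq : esymm (Fin 4) K 3 =
    X 0 * X 1 * X 2 + X 0 * X 1 * X 3 + X 0 * X 2 * X 3 + X 1 * X 2 * X 3 := by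
  have h : (Finset.powersetCard 3 (Finset.univ : Finset (Fin 4))) =
      {{0,1,2},{0,1,3},{0,2,3},{1,2,3}} := by decide
  rw [esymm, h]
  simp (config := { decide := true }) [Finset.sum_insert, Finset.prod_insert]
  ring

lemma esymm4_eq : esymm (Fin 4) K 4 = X 0 * X 1 * X 2 * X 3 := by
  have h : (Finset.powersetCard 4 (Finset.univ : Finset (Fin 4))) = {{0,1,2,3}} := by decide
  rw [esymm, h]
  simp (config := { decide := true }) [Finset.prod_insert]
  ring

lemma symQuartic_isSymmetric (a : Fin 4 → K) : (symQuartic a).IsSymmetric := by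
  intro e
  simp only [symQuartic, map_add, map_mul, map_pow, rename_C, rename_esymm]

lemma pderiv_symQuartic [CharP K 2] (a : Fin 4 → K) (i : Fin 4) :
    pderiv i (symQuartic a) =
      C (a 1) * esymm (Fin 4) K 1 ^ 2 * pderiv i (esymm (Fin 4) K 2)
      + C (a 2) * (pderiv i (esymm (Fin 4) K 1) * esymm (Fin 4) K 3
          + esymm (Fin 4) K 1 * pderiv i (esymm (Fin 4) K 3))
      + C (a 3) * pderiv i (esymm (Fin 4) K 4) := by
  have hk : ∀ n : ℕ, (n : K) = 0 → ((n : ℕ) : MvPolynomial (Fin 4) K) = 0 := by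
    intro n hn
    rw [← MvPolynomial.C_eq_coe_nat, hn, map_zero]
  have h2K : (2 : K) = 0 := CharTwo.two_eq_zero
  have h4 : ((4 : ℕ) : MvPolynomial (Fin 4) K) = 0 := hk 4 (by push_cast; linear_combination 2 * h2K)
  have h2 : ((2 : ℕ) : MvPolynomial (Fin 4) K) = 0 := hk 2 (by push_cast; exact h2K)
  simp only [symQuartic, map_add, pderiv_mul, pderiv_pow, pderiv_C, h4, h2]
  ring

/-- If a symmetric polynomial and all its partial derivatives vanish on every scalar multiple
of `v`, then the `S₄`-orbit of `[v]` is contained in the singular locus. -/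
lemma orbit_subset_singLocus {F : MvPolynomial (Fin 4) K} (hF : F.IsSymmetric)
    (v : Fin 4 → K)
    (h : ∀ c : K, eval (c • v) F = 0 ∧ ∀ i, eval (c • v) (pderiv i F) = 0) :
    s4Orbit v ⊆ singLocus F := by
  rintro p ⟨g, hg, rfl⟩ w hw hmk
  rw [Projectivization.mk_eq_mk_iff] at hmk
  obtain ⟨u, rfl⟩ := hmk
  have hwg : (u • (v ∘ ⇑g)) ∘ ⇑g⁻¹ = (u : K) • v := by
    funext j
    simp [Function.comp, Units.smul_def]
  constructor
  · calc eval (u • (v ∘ ⇑g)) F = eval (u • (v ∘ ⇑g)) (rename (⇑g⁻¹) F) := by rw [hF g⁻¹]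
    _ = eval ((u • (v ∘ ⇑g)) ∘ ⇑g⁻¹) F := by rw [eval_rename]
    _ = 0 := by rw [hwg]; exact (h u).1
  · intro i
    have h1 : pderiv i F = rename (⇑g⁻¹) (pderiv (g i) F) := by
      have := pderiv_rename (f := ⇑g⁻¹) (Equiv.injective g⁻¹) (g i) F
      simp only [(Equiv.symm_apply_apply g i : g⁻¹ (g i) = i), hF g⁻¹] at this
      exact (congrArg (fun j => pderiv j F) (g.symm_apply_apply i)).symm.trans this
    rw [h1, eval_rename, hwg]
    exact (h u).2 (g i)

variable [CharP K 2]

lemma evalA (a : Fin 4 → K) (c : K) :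
    eval (c • ![0,0,1,1] : Fin 4 → K) (symQuartic a) = 0 := by
  have h2 : (2 : K) = 0 := CharTwo.two_eq_zero
  simp (config := { decide := true }) only [symQuartic, esymm1_eq, esymm2_eq, esymm3_eq,
    esymm4_eq, map_add, eval_add, eval_mul, eval_pow, eval_C, eval_X, Pi.smul_apply,
    smul_eq_mul, Matrix.cons_val_zero, Matrix.cons_val_one, Matrix.head_cons,
    Matrix.cons_val_two, Matrix.tail_cons, Matrix.cons_val_three]
  linear_combination (8 * a 0 * c ^ 4 + 2 * a 1 * c ^ 4) * h2

lemma evalA' (a : Fin 4 → K) (c : K) (i : Fin 4) :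
    eval (c • ![0,0,1,1] : Fin 4 → K) (pderiv i (symQuartic a)) = 0 := by
  have h2K : (2 : K) = 0 := CharTwo.two_eq_zero
  rw [pderiv_symQuartic]
  have hi : i = 0 ∨ i = 1 ∨ i = 2 ∨ i = 3 := by fin_cases i <;> decide
  rcases hi with rfl | rfl | rfl | rfl <;>
    simp (config := { decide := true }) only [esymm1_eq, esymm2_eq, esymm3_eq, esymm4_eq,
      map_add, pderiv_mul, pderiv_X, Pi.single_apply, if_true, if_false, map_one, map_zero,
      eval_add, eval_mul, eval_pow,
      eval_C, eval_X, eval_zero, Pi.smul_apply, smul_eq_mul,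
      Matrix.cons_val_zero, Matrix.cons_val_one, Matrix.head_cons,
      Matrix.cons_val_two, Matrix.tail_cons, Matrix.cons_val_three]
  · linear_combination (4 * a 1 * c^3 + a 2 * c^3) * h2K
  · linear_combination (4 * a 1 * c^3 + a 2 * c^3) * h2K
  · linear_combination (2 * a 1 * c^3) * h2K
  · linear_combination (2 * a 1 * c^3) * h2K

lemma evalB (a : Fin 4 → K) (h0 : a 0 = 0) (c : K) :
    eval (c • ![0,0,0,1] : Fin 4 → K) (symQuartic a) = 0 := by
  have h2K : (2 : K) = 0 := CharTwo.two_eq_zero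
  simp (config := { decide := true }) only [symQuartic, esymm1_eq, esymm2_eq, esymm3_eq,
    esymm4_eq, map_add, eval_add, eval_mul, eval_pow, eval_C, eval_X, Pi.smul_apply,
    smul_eq_mul, Matrix.cons_val_zero, Matrix.cons_val_one, Matrix.head_cons,
    Matrix.cons_val_two, Matrix.tail_cons, Matrix.cons_val_three]
  linear_combination (c^4) * h0

lemma evalB' (a : Fin 4 → K) (h0 : a 0 = 0) (h1 : a 1 = 0) (c : K) (i : Fin 4) :
    eval (c • ![0,0,0,1] : Fin 4 → K) (pderiv i (symQuartic a)) = 0 := by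
  have h2K : (2 : K) = 0 := CharTwo.two_eq_zero
  rw [pderiv_symQuartic]
  have hi : i = 0 ∨ i = 1 ∨ i = 2 ∨ i = 3 := by fin_cases i <;> decide
  rcases hi with rfl | rfl | rfl | rfl <;>
    simp (config := { decide := true }) only [esymm1_eq, esymm2_eq, esymm3_eq, esymm4_eq,
      map_add, pderiv_mul, pderiv_X, Pi.single_apply, if_true, if_false, map_one, map_zero,
      eval_add, eval_mul, eval_pow,
      eval_C, eval_X, eval_zero, Pi.smul_apply, smul_eq_mul,
      Matrix.cons_val_zero, Matrix.cons_val_one, Matrix.head_cons,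
      Matrix.cons_val_two, Matrix.tail_cons, Matrix.cons_val_three]
  · linear_combination (c^3) * h1
  · linear_combination (c^3) * h1
  · linear_combination (c^3) * h1
  · linear_combination (0 : K) * h1

lemma v0001_ne_zero : (![0,0,0,1] : Fin 4 → K) ≠ 0 := by
  intro hc
  have : (![0,0,0,1] : Fin 4 → K) 3 = 0 := by rw [hc]; rfl
  simp at this

lemma evalC (a : Fin 4 → K) (hF : eval (![0,0,0,1] : Fin 4 → K) (symQuartic a) = 0) :
    a 0 = 0 := by
  have h2K : (2 : K) = 0 := CharTwo.two_eq_zero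
  simp (config := { decide := true }) only [symQuartic, esymm1_eq, esymm2_eq, esymm3_eq,
    esymm4_eq, map_add, eval_add, eval_mul, eval_pow, eval_C, eval_X,
    Matrix.cons_val_zero, Matrix.cons_val_one, Matrix.head_cons,
    Matrix.cons_val_two, Matrix.tail_cons, Matrix.cons_val_three] at hF
  linear_combination hF

lemma evalC' (a : Fin 4 → K)
    (hF : eval (![0,0,0,1] : Fin 4 → K) (pderiv 0 (symQuartic a)) = 0) :
    a 1 = 0 := by
  have h2K : (2 : K) = 0 := CharTwo.two_eq_zero
  rw [pderiv_symQuartic] at hF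
  simp (config := { decide := true }) only [esymm1_eq, esymm2_eq, esymm3_eq, esymm4_eq,
    map_add, pderiv_mul, pderiv_X, Pi.single_apply, if_true, if_false, map_one, map_zero,
    eval_add, eval_mul, eval_pow, eval_C, eval_X, eval_zero,
    Matrix.cons_val_zero, Matrix.cons_val_one, Matrix.head_cons,
    Matrix.cons_val_two, Matrix.tail_cons, Matrix.cons_val_three] at hF
  linear_combination hF

end Aux

/-- For any nonzero `a ∈ K⁴` over an algebraically closed field of characteristic 2, the
singular locus of the symmetric quartic `X_a` contains the `S₄`-orbit of `[0:0:1:1]`, and it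
contains the `S₄`-orbit of `[0:0:0:1]` if and only if `a₁ = a₂ = 0`. -/
theorem symQuartic_orbit_memberships
    {K : Type*} [Field K] [IsAlgClosed K] [CharP K 2]
    (a : Fin 4 → K) (ha : a ≠ 0) :
    s4Orbit (![0, 0, 1, 1] : Fin 4 → K) ⊆ singLocus (symQuartic a) ∧
    (s4Orbit (![0, 0, 0, 1] : Fin 4 → K) ⊆ singLocus (symQuartic a) ↔
      a 0 = 0 ∧ a 1 = 0) := by
  refine ⟨orbit_subset_singLocus (symQuartic_isSymmetric a) _
      (fun c => ⟨evalA a c, evalA' a c⟩), ?_, ?_⟩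
  · intro h
    have hv : (![0,0,0,1] : Fin 4 → K) ≠ 0 := v0001_ne_zero
    have hv' : (![0,0,0,1] : Fin 4 → K) ∘ ⇑(1 : Equiv.Perm (Fin 4)) ≠ 0 := by
      simpa using hv
    have hmem : Projectivization.mk K (![0,0,0,1] ∘ ⇑(1 : Equiv.Perm (Fin 4))) hv'
        ∈ s4Orbit (![0, 0, 0, 1] : Fin 4 → K) := ⟨1, hv', rfl⟩
    have hs := h hmem (![0,0,0,1] : Fin 4 → K) hv
      (by rw [Projectivization.mk_eq_mk_iff]; exact ⟨1, by simp⟩)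
    exact ⟨evalC a hs.1, evalC' a (hs.2 0)⟩
  · rintro ⟨h0, h1⟩
    exact orbit_subset_singLocus (symQuartic_isSymmetric a) _
      (fun c => ⟨evalB a h0 c, evalB' a h0 h1 c⟩)

end
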